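/- Every set S destabilising the chain graph Ch_k (k ≥ 2) has size at least 3, and |S| = 3 holds exactly when S = N[v] for some bivalent vertex v of Ch_k. -/

import Mathlib

open SimpleGraph

/-- The independence number of a graph. -/
noncomputable def indepNum {V : Type} (G : SimpleGraph V) : ℕ :=
  sSup {n : ℕ | ∃ s : Set V, s.Finite ∧ s.ncard = n ∧ ∀ a ∈ s, ∀ b ∈ s, ¬ G.Adj a b}

/-- The number of edges of a graph. -/
noncomputable def numEdges {V : Type} (G : SimpleGraph V) : ℕ := G.edgeSet.ncard

/-- The degree (valency) of a vertex. -/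
noncomputable def deg {V : Type} (G : SimpleGraph V) (v : V) : ℕ := (G.neighborSet v).ncard

/-- The second valency `d²(v) = ∑_{w ∈ N(v)} d(w)`. -/
noncomputable def secondDeg {V : Type} (G : SimpleGraph V) (v : V) : ℕ :=
  ∑ᶠ w ∈ G.neighborSet v, deg G w

/-- `p = (a,b,c,d)` is an (ordered) 4-cycle of `G`. -/
def IsC4 {V : Type} (G : SimpleGraph V) (p : V × V × V × V) : Prop :=
  G.Adj p.1 p.2.1 ∧ G.Adj p.2.1 p.2.2.1 ∧ G.Adj p.2.2.1 p.2.2.2 ∧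
    G.Adj p.2.2.2 p.1 ∧ p.1 ≠ p.2.2.1 ∧ p.2.1 ≠ p.2.2.2

/-- The number of 4-cycles of `G`; each 4-cycle yields 8 ordered tuples. -/
noncomputable def numC4 {V : Type} (G : SimpleGraph V) : ℕ :=
  {p : V × V × V × V | IsC4 G p}.ncard / 8

/-- The number of 4-cycles of `G` containing a vertex of `S`. -/
noncomputable def numC4Through {V : Type} (G : SimpleGraph V) (S : Set V) : ℕ :=
  {p : V × V × V × V | IsC4 G p ∧ (p.1 ∈ S ∨ p.2.1 ∈ S ∨ p.2.2.1 ∈ S ∨ p.2.2.2 ∈ S)}.ncard / 8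

/-- The invariant `ν(G) = 3e(G) − 17n(G) + 35α(G) + N(C₄;G)`. -/
noncomputable def nu {V : Type} (G : SimpleGraph V) : ℤ :=
  3 * (numEdges G : ℤ) - 17 * (Nat.card V : ℤ) + 35 * (_root_.indepNum G : ℤ) + (numC4 G : ℤ)

/-- The closed neighbourhood `N[v]`. -/
def closedNbhd {V : Type} (G : SimpleGraph V) (v : V) : Set V := insert v (G.neighborSet v)

/-- `S` destabilises `G` : removing `S` decreases the independence number. -/
def Destab {V : Type} (G : SimpleGraph V) (S : Set V) : Prop :=
  _root_.indepNum (G.induce Sᶜ) < _root_.indepNum G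

/-- `G` is edge-critical (α-critical): removing any edge increases the independence number. -/
def EdgeCritical {V : Type} (G : SimpleGraph V) : Prop :=
  ∀ e ∈ G.edgeSet, _root_.indepNum G < _root_.indepNum (G.deleteEdges {e})

/-- The cycle graph on `ZMod m`. -/
def cycZ (m : ℕ) : SimpleGraph (ZMod m) := SimpleGraph.fromRel (fun i j => j = i + 1)

/-- `IsChainGraph G k` : `G` is (a copy of) the chain graph `Ch_k`.  `Ch_2 = C_5` and
`Ch_{k+1}` is obtained from `Ch_k` by picking a bivalent vertex `x` and adding new
vertices `v, w₁, w₂` with edges `vw₁`, `vw₂`, `w₁x` and `w₂y` for every `y ∈ N(x)`. -/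
inductive IsChainGraph : {V : Type} → SimpleGraph V → ℕ → Prop where
  | base {V : Type} (G : SimpleGraph V) (e : G ≃g cycZ 5) : IsChainGraph G 2
  | step {V : Type} (G : SimpleGraph V) (k : ℕ) (v w1 w2 x : V)
      (hvw1 : v ≠ w1) (hvw2 : v ≠ w2) (hw12 : w1 ≠ w2)
      (hx : x ∉ ({v, w1, w2} : Set V))
      (hchain : IsChainGraph (G.induce ({v, w1, w2} : Set V)ᶜ) k)
      (hdeg : deg (G.induce ({v, w1, w2} : Set V)ᶜ) ⟨x, hx⟩ = 2)
      (hv : ∀ u, G.Adj v u ↔ u = w1 ∨ u = w2)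
      (hw1 : ∀ u, G.Adj w1 u ↔ u = v ∨ u = x)
      (hw2 : ∀ u, G.Adj w2 u ↔ u = v ∨ (u ∉ ({v, w1, w2} : Set V) ∧ G.Adj x u)) :
      IsChainGraph G (k + 1)

/-!
By induction along the construction of `Ch_k` we prove a stronger statement `GoodIn G A` about
an induced subgraph `G[A]`: every destabiliser of `G[A]` with at most three vertices is the
closed neighbourhood of a bivalent vertex, and moreover `G[A]` is triangle-free, has minimum
degree 2, and no two bivalent vertices have the same neighbourhood. For `C₅` this is a finite
check.

In the step, `v, w₁, w₂` are attached at a bivalent vertex `x` of `G[A]` with neighbours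
`y₁, y₂`, and `α(G) ≤ α(G[A]) + 1`. So if `S` destabilises `G`, no maximum independent set of
`G[A]` avoiding `S` can be enlarged by a vertex of `{v, w₁, w₂} \ S`; this makes a small set of
vertices of `A` read off from `S` (such as `S ∩ A`, `{x} ∪ (S ∩ A)` or `{y₁, y₂} ∪ (S ∩ A)`)
destabilise `G[A]`. The induction hypothesis then leaves only `N[v]`, `N[w₁]` and the closed
neighbourhoods of bivalent vertices of `G[A]` away from `x`; the extra clauses single out `x` as
the only bivalent vertex of `G[A]` whose closed neighbourhood contains `y₁` and `y₂`, and they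
persist from `G[A]` to `G`.
-/

open Set

section IndependenceNumber

variable {V W : Type} {G : SimpleGraph V} {s A U S : Set V}

theorem SimpleGraph.IsIndepSet.mono {t : Set V} (hs : G.IsIndepSet s) (hts : t ⊆ s) :
    G.IsIndepSet t :=
  Set.Pairwise.mono hts hs

theorem SimpleGraph.IsIndepSet.insert_of_not_adj {a : V} (hs : G.IsIndepSet s)
    (ha : ∀ b ∈ s, ¬ G.Adj a b) : G.IsIndepSet (insert a s) :=
  Pairwise.insert hs fun b hb _ => ⟨ha b hb, fun hba => ha b hb hba.symm⟩

theorem SimpleGraph.isIndepSet_pair_of_not_adj {a b : V} (hab : ¬ G.Adj a b) :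
    G.IsIndepSet {a, b} :=
  pairwise_pair.2 fun _ => ⟨hab, fun hba => hab hba.symm⟩

theorem SimpleGraph.IsIndepSet.ncard_le_one_of_subset_pair {a b : V} (hs : G.IsIndepSet s)
    (hab : G.Adj a b) (hsab : s ⊆ {a, b}) : s.ncard ≤ 1 := by
  refine (ncard_le_one (((finite_singleton b).insert a).subset hsab)).2 fun c hc d hd => ?_
  by_contra hcd
  rcases hsab hc with rfl | rfl <;> rcases hsab hd with rfl | rfl
  all_goals first | exact hcd rfl | exact hs hc hd hcd hab | exact hs hc hd hcd hab.symm

theorem SimpleGraph.Embedding.isIndepSet_image_iff {H : SimpleGraph W} (f : H ↪g G)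
    {t : Set W} : G.IsIndepSet (f '' t) ↔ H.IsIndepSet t := by
  simp only [isIndepSet_iff, f.injective.injOn.pairwise_image]
  simp only [Set.Pairwise, Function.onFun, f.map_adj_iff]

theorem SimpleGraph.Embedding.neighborSet_inter_image {H : SimpleGraph W} (f : H ↪g G) (u : W)
    (B : Set W) : G.neighborSet (f u) ∩ f '' B = f '' (H.neighborSet u ∩ B) := by
  ext b
  constructor
  · rintro ⟨hadj, c, hc, rfl⟩
    exact ⟨c, ⟨f.map_adj_iff.1 hadj, hc⟩, rfl⟩
  · rintro ⟨c, ⟨hadj, hc⟩, rfl⟩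
    exact ⟨f.map_adj_iff.2 hadj, c, hc, rfl⟩

variable [Finite V]

theorem bddAbove_indepNum_set (G : SimpleGraph V) :
    BddAbove {n | ∃ s : Set V, s.Finite ∧ s.ncard = n ∧ ∀ a ∈ s, ∀ b ∈ s, ¬ G.Adj a b} :=
  ⟨Nat.card V, by rintro n ⟨s, -, rfl, -⟩; exact ncard_le_card s⟩

theorem SimpleGraph.IsIndepSet.ncard_le_indepNum (hs : G.IsIndepSet s) :
    s.ncard ≤ _root_.indepNum G :=
  le_csSup (bddAbove_indepNum_set G)
    ⟨s, s.toFinite, rfl, fun _ ha _ hb hab => hs ha hb (G.ne_of_adj hab) hab⟩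

theorem exists_isIndepSet_ncard_eq_indepNum (G : SimpleGraph V) :
    ∃ s, G.IsIndepSet s ∧ s.ncard = _root_.indepNum G := by
  obtain ⟨s, -, hs, hind⟩ :=
    Nat.sSup_mem (by exact ⟨0, ∅, finite_empty, ncard_empty V, by simp⟩)
      (bddAbove_indepNum_set G)
  exact ⟨s, fun _ ha _ hb _ => hind _ ha _ hb, hs⟩

theorem SimpleGraph.IsIndepSet.ncard_le_indepNum_induce (hs : G.IsIndepSet s) (hsA : s ⊆ A) :
    s.ncard ≤ _root_.indepNum (G.induce A) := by
  obtain ⟨t, -, rfl⟩ := subset_image_iff.1 (hsA.trans (Subtype.coe_image_univ A).symm.subset)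
  rw [ncard_image_of_injective _ Subtype.val_injective]
  exact ((Embedding.induce A).isIndepSet_image_iff.1 hs).ncard_le_indepNum

theorem exists_isIndepSet_subset_ncard_eq_indepNum_induce (G : SimpleGraph V) (A : Set V) :
    ∃ s ⊆ A, G.IsIndepSet s ∧ s.ncard = _root_.indepNum (G.induce A) := by
  obtain ⟨t, ht, hcard⟩ := exists_isIndepSet_ncard_eq_indepNum (G.induce A)
  refine ⟨(↑) '' t, Subtype.coe_image_subset A t, (Embedding.induce A).isIndepSet_image_iff.2 ht,
    ?_⟩
  rw [ncard_image_of_injective _ Subtype.val_injective, hcard]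

theorem indepNum_induce_univ (G : SimpleGraph V) :
    _root_.indepNum (G.induce univ) = _root_.indepNum G := by
  obtain ⟨s, -, hs, hcard⟩ := exists_isIndepSet_subset_ncard_eq_indepNum_induce G univ
  obtain ⟨t, ht, htcard⟩ := exists_isIndepSet_ncard_eq_indepNum G
  exact le_antisymm (hcard ▸ hs.ncard_le_indepNum)
    (htcard ▸ ht.ncard_le_indepNum_induce (subset_univ t))

theorem indepNum_induce_image [Finite W] {H : SimpleGraph W} (f : H ↪g G) (B : Set W) :
    _root_.indepNum (G.induce (f '' B)) = _root_.indepNum (H.induce B) := by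
  obtain ⟨s, hsB, hs, hcard⟩ := exists_isIndepSet_subset_ncard_eq_indepNum_induce G (f '' B)
  obtain ⟨t, htB, rfl⟩ := subset_image_iff.1 hsB
  obtain ⟨t', ht'B, ht', ht'card⟩ := exists_isIndepSet_subset_ncard_eq_indepNum_induce H B
  refine le_antisymm ?_ ?_
  · rw [← hcard, ncard_image_of_injective _ f.injective]
    exact (f.isIndepSet_image_iff.1 hs).ncard_le_indepNum_induce htB
  · rw [← ht'card, ← ncard_image_of_injective _ f.injective]
    exact (f.isIndepSet_image_iff.2 ht').ncard_le_indepNum_induce (image_mono ht'B)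

end IndependenceNumber

section Destabilisers

variable {V W : Type} {G : SimpleGraph V} {s A U S : Set V}

def DestabIn (G : SimpleGraph V) (A U : Set V) : Prop :=
  _root_.indepNum (G.induce (A \ U)) < _root_.indepNum (G.induce A)

theorem subset_compl_of_subset_sdiff (hs : s ⊆ A \ U) (hU : S ∩ A ⊆ U) : s ⊆ Sᶜ :=
  fun _ hb hbS => (hs hb).2 (hU ⟨hbS, (hs hb).1⟩)

variable [Finite V]

theorem ncard_inter_add_ncard_le {T : Set V} (hTS : T ⊆ S) (hTA : T ⊆ Aᶜ) :
    (S ∩ A).ncard + T.ncard ≤ S.ncard := by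
  rw [← ncard_inter_add_ncard_sdiff_eq_ncard S A]
  exact Nat.add_le_add_left (ncard_le_ncard (t := S \ A) fun _ hb => ⟨hTS hb, hTA hb⟩) _

theorem destabIn_univ_iff : DestabIn G univ S ↔ Destab G S := by
  rw [DestabIn, Destab, ← compl_eq_univ_sdiff, indepNum_induce_univ]

theorem Destab.ncard_lt (hS : Destab G S) (hs : G.IsIndepSet s) (hsS : s ⊆ Sᶜ) :
    s.ncard < _root_.indepNum G :=
  (hs.ncard_le_indepNum_induce hsS).trans_lt hS

theorem exists_isIndepSet_of_not_destabIn (h : ¬ DestabIn G A U) :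
    ∃ s ⊆ A \ U, G.IsIndepSet s ∧ _root_.indepNum (G.induce A) ≤ s.ncard := by
  obtain ⟨s, hs, hind, hcard⟩ := exists_isIndepSet_subset_ncard_eq_indepNum_induce G (A \ U)
  exact ⟨s, hs, hind, hcard ▸ not_lt.1 h⟩

theorem destabIn_image_iff [Finite W] {H : SimpleGraph W} (f : H ↪g G) {B U : Set W} :
    DestabIn G (f '' B) (f '' U) ↔ DestabIn H B U := by
  rw [DestabIn, DestabIn, ← image_sdiff f.injective, indepNum_induce_image,
    indepNum_induce_image]

theorem ncard_closedNbhd (G : SimpleGraph V) (u : V) : (closedNbhd G u).ncard = deg G u + 1 :=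
  ncard_insert_of_notMem (G.irrefl (v := u))

theorem eq_closedNbhd_of_subset {u : V} (hu : deg G u = 2) (hsub : closedNbhd G u ⊆ S)
    (hS : S.ncard ≤ 3) : S = closedNbhd G u :=
  (eq_of_subset_of_ncard_le hsub (by rw [ncard_closedNbhd, hu]; exact hS)).symm

end Destabilisers

section Invariant

variable {V W : Type} [Finite V] {G : SimpleGraph V} {A U : Set V} {u : V}

structure GoodIn (G : SimpleGraph V) (A : Set V) : Prop where
  eq_insert_of_destabIn : ∀ U ⊆ A, DestabIn G A U → U.ncard ≤ 3 →
    ∃ u ∈ A, (G.neighborSet u ∩ A).ncard = 2 ∧ U = insert u (G.neighborSet u ∩ A)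
  not_adj_of_adj_of_adj : ∀ a ∈ A, ∀ b ∈ A, ∀ c ∈ A, G.Adj a b → G.Adj a c → ¬ G.Adj b c
  two_le_ncard_neighborSet_inter : ∀ u ∈ A, 2 ≤ (G.neighborSet u ∩ A).ncard
  eq_of_neighborSet_inter_eq : ∀ u₁ ∈ A, ∀ u₂ ∈ A, (G.neighborSet u₁ ∩ A).ncard = 2 →
    G.neighborSet u₁ ∩ A = G.neighborSet u₂ ∩ A → u₁ = u₂

namespace GoodIn

theorem three_le_ncard (hA : GoodIn G A) (hUA : U ⊆ A) (hU : DestabIn G A U) :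
    3 ≤ U.ncard := by
  by_contra! hlt
  obtain ⟨u, -, h2, rfl⟩ := hA.eq_insert_of_destabIn U hUA hU hlt.le
  rw [ncard_insert_of_notMem fun hu => G.irrefl hu.1, h2] at hlt
  omega

theorem neighborSet_subset_of_deg_eq_two (hA : GoodIn G A) (hu : u ∈ A) (hdeg : deg G u = 2) :
    G.neighborSet u ⊆ A := by
  intro b hb
  by_contra hbA
  have hlt : (G.neighborSet u ∩ A).ncard < deg G u :=
    ncard_lt_ncard ⟨inter_subset_left, fun hsub => hbA (hsub hb).2⟩
  have := hA.two_le_ncard_neighborSet_inter u hu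
  omega

theorem image [Finite W] {H : SimpleGraph W} {B : Set W} (hB : GoodIn H B) (f : H ↪g G) :
    GoodIn G (f '' B) where
  eq_insert_of_destabIn U hU hd h3 := by
    obtain ⟨U, hUB, rfl⟩ := subset_image_iff.1 hU
    rw [destabIn_image_iff] at hd
    rw [ncard_image_of_injective _ f.injective] at h3
    obtain ⟨u, hu, h2, rfl⟩ := hB.eq_insert_of_destabIn U hUB hd h3
    refine ⟨f u, mem_image_of_mem f hu, ?_, ?_⟩
    · rw [f.neighborSet_inter_image, ncard_image_of_injective _ f.injective, h2]
    · rw [f.neighborSet_inter_image, image_insert_eq]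
  not_adj_of_adj_of_adj := by
    simp only [forall_mem_image, f.map_adj_iff]
    exact hB.not_adj_of_adj_of_adj
  two_le_ncard_neighborSet_inter := by
    simp only [forall_mem_image, f.neighborSet_inter_image,
      ncard_image_of_injective _ f.injective]
    exact hB.two_le_ncard_neighborSet_inter
  eq_of_neighborSet_inter_eq := by
    simp only [forall_mem_image, f.neighborSet_inter_image,
      ncard_image_of_injective _ f.injective, (image_injective.2 f.injective).eq_iff,
      f.injective.eq_iff]
    exact hB.eq_of_neighborSet_inter_eq

end GoodIn

end Invariant

section CycleFive

theorem cycZ_five_adj_iff (a b : ZMod 5) : (cycZ 5).Adj a b ↔ b = a + 1 ∨ b = a + 4 := by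
  simp only [cycZ, fromRel_adj]
  revert a b
  decide

theorem cycZ_five_neighborSet (a : ZMod 5) : (cycZ 5).neighborSet a = {a + 1, a + 4} := by
  ext b
  simp [cycZ_five_adj_iff]

theorem ncard_cycZ_five_neighborSet (a : ZMod 5) : ((cycZ 5).neighborSet a).ncard = 2 := by
  rw [cycZ_five_neighborSet, ncard_pair]
  revert a
  decide

theorem indepNum_cycZ_five_le : _root_.indepNum (cycZ 5) ≤ 2 := by
  classical
  obtain ⟨s, hs, hcard⟩ := exists_isIndepSet_ncard_eq_indepNum (cycZ 5)
  have key : ∀ s : Finset (ZMod 5), (∀ a ∈ s, ∀ b ∈ s, ¬ (b = a + 1 ∨ b = a + 4)) →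
      s.card ≤ 2 := by
    decide
  rw [← hcard, ncard_eq_toFinset_card']
  refine key _ fun a ha b hb hab => ?_
  rw [← cycZ_five_adj_iff] at hab
  exact hs (by simpa using ha) (by simpa using hb) ((cycZ 5).ne_of_adj hab) hab

theorem exists_eq_insert_of_destabIn_cycZ_five {U : Set (ZMod 5)} (hU : DestabIn (cycZ 5) univ U)
    (h3 : U.ncard ≤ 3) : ∃ u, U = {u, u + 1, u + 4} := by
  classical
  have hclique : ∀ a ∉ U, ∀ b ∉ U, a ≠ b → b = a + 1 ∨ b = a + 4 := by
    intro a ha b hb hab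
    by_contra hn
    rw [← cycZ_five_adj_iff] at hn
    have hlt := ((isIndepSet_pair_of_not_adj hn).ncard_le_indepNum_induce (A := univ \ U)
      (by simp [insert_subset_iff, ha, hb])).trans_lt hU
    rw [ncard_pair hab, indepNum_induce_univ] at hlt
    exact absurd indepNum_cycZ_five_le (by omega)
  have key : ∀ U : Finset (ZMod 5), U.card ≤ 3 →
      (∀ a ∉ U, ∀ b ∉ U, a ≠ b → b = a + 1 ∨ b = a + 4) → ∃ u, U = {u, u + 1, u + 4} := by
    decide
  obtain ⟨u, hu⟩ :=
    key U.toFinset (by rwa [← ncard_eq_toFinset_card']) (by simpa using hclique)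
  exact ⟨u, by simpa using congrArg ((↑) : Finset (ZMod 5) → Set (ZMod 5)) hu⟩

theorem goodIn_cycZ_five : GoodIn (cycZ 5) univ where
  eq_insert_of_destabIn U _ hU h3 := by
    obtain ⟨u, rfl⟩ := exists_eq_insert_of_destabIn_cycZ_five hU h3
    refine ⟨u, mem_univ u, ?_, ?_⟩
    · rw [inter_univ, ncard_cycZ_five_neighborSet]
    · rw [inter_univ, cycZ_five_neighborSet]
  not_adj_of_adj_of_adj a _ b _ c _ := by
    simp only [cycZ_five_adj_iff]
    revert a b c
    decide
  two_le_ncard_neighborSet_inter u _ := by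
    rw [inter_univ, ncard_cycZ_five_neighborSet]
  eq_of_neighborSet_inter_eq u₁ _ u₂ _ _ h := by
    simp only [inter_univ, cycZ_five_neighborSet] at h
    have h₁ : u₁ + 1 ∈ ({u₂ + 1, u₂ + 4} : Set (ZMod 5)) := h ▸ mem_insert _ _
    have h₄ : u₁ + 4 ∈ ({u₂ + 1, u₂ + 4} : Set (ZMod 5)) := h ▸ mem_insert_of_mem _ rfl
    simp only [mem_insert_iff, mem_singleton_iff] at h₁ h₄
    have key : ∀ u₁ u₂ : ZMod 5, (u₁ + 1 = u₂ + 1 ∨ u₁ + 1 = u₂ + 4) →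
        (u₁ + 4 = u₂ + 1 ∨ u₁ + 4 = u₂ + 4) → u₁ = u₂ := by
      decide
    exact key u₁ u₂ h₁ h₄

end CycleFive

section ChainExtension

variable {V : Type} {G : SimpleGraph V} {A S s : Set V} {u v w₁ w₂ x y₁ y₂ : V}

/-- `G` arises from `G[A]` by the recursive step defining chain graphs, applied to the
bivalent vertex `x` of `G[A]` whose neighbours there are `y₁` and `y₂`. -/
structure IsChainExtension (G : SimpleGraph V) (A : Set V) (v w₁ w₂ x y₁ y₂ : V) : Prop where
  compl_eq : Aᶜ = {v, w₁, w₂}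
  adj_v : ∀ u, G.Adj v u ↔ u = w₁ ∨ u = w₂
  adj_w₁ : ∀ u, G.Adj w₁ u ↔ u = v ∨ u = x
  adj_w₂ : ∀ u, G.Adj w₂ u ↔ u = v ∨ u = y₁ ∨ u = y₂
  neighborSet_x_inter : G.neighborSet x ∩ A = {y₁, y₂}
  x_mem : x ∈ A
  w₁_ne_w₂ : w₁ ≠ w₂
  y₁_ne_y₂ : y₁ ≠ y₂

namespace IsChainExtension

theorem swap (h : IsChainExtension G A v w₁ w₂ x y₁ y₂) :
    IsChainExtension G A v w₁ w₂ x y₂ y₁ :=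
  { h with
    adj_w₂ := fun u => by rw [h.adj_w₂, or_comm (a := u = y₁)]
    neighborSet_x_inter := by rw [h.neighborSet_x_inter, pair_comm]
    y₁_ne_y₂ := h.y₁_ne_y₂.symm }

theorem notMem_iff (h : IsChainExtension G A v w₁ w₂ x y₁ y₂) :
    u ∉ A ↔ u = v ∨ u = w₁ ∨ u = w₂ := by
  rw [← mem_compl_iff, h.compl_eq, mem_insert_iff, mem_insert_iff, mem_singleton_iff]

theorem v_notMem (h : IsChainExtension G A v w₁ w₂ x y₁ y₂) : v ∉ A :=
  h.notMem_iff.2 (.inl rfl)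

theorem w₁_notMem (h : IsChainExtension G A v w₁ w₂ x y₁ y₂) : w₁ ∉ A :=
  h.notMem_iff.2 (.inr (.inl rfl))

theorem w₂_notMem (h : IsChainExtension G A v w₁ w₂ x y₁ y₂) : w₂ ∉ A :=
  h.notMem_iff.2 (.inr (.inr rfl))

theorem adj_v_w₁ (h : IsChainExtension G A v w₁ w₂ x y₁ y₂) : G.Adj v w₁ :=
  (h.adj_v w₁).2 (.inl rfl)

theorem adj_v_w₂ (h : IsChainExtension G A v w₁ w₂ x y₁ y₂) : G.Adj v w₂ :=
  (h.adj_v w₂).2 (.inr rfl)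

theorem adj_w₁_x (h : IsChainExtension G A v w₁ w₂ x y₁ y₂) : G.Adj w₁ x :=
  (h.adj_w₁ x).2 (.inr rfl)

theorem adj_w₂_y₁ (h : IsChainExtension G A v w₁ w₂ x y₁ y₂) : G.Adj w₂ y₁ :=
  (h.adj_w₂ y₁).2 (.inr (.inl rfl))

theorem adj_x_y₁ (h : IsChainExtension G A v w₁ w₂ x y₁ y₂) : G.Adj x y₁ := by
  have hy : y₁ ∈ G.neighborSet x ∩ A := h.neighborSet_x_inter ▸ mem_insert y₁ {y₂}
  exact hy.1

theorem y₁_mem (h : IsChainExtension G A v w₁ w₂ x y₁ y₂) : y₁ ∈ A := by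
  have hy : y₁ ∈ G.neighborSet x ∩ A := h.neighborSet_x_inter ▸ mem_insert y₁ {y₂}
  exact hy.2

theorem not_adj_v_of_mem (h : IsChainExtension G A v w₁ w₂ x y₁ y₂) (hu : u ∈ A) :
    ¬ G.Adj v u := fun hadj => by
  rcases (h.adj_v u).1 hadj with rfl | rfl
  exacts [h.w₁_notMem hu, h.w₂_notMem hu]

theorem not_adj_w₁_w₂ (h : IsChainExtension G A v w₁ w₂ x y₁ y₂) : ¬ G.Adj w₁ w₂ := fun hadj => by
  rcases (h.adj_w₁ w₂).1 hadj with hw | hw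
  exacts [G.ne_of_adj h.adj_v_w₂ hw.symm, h.w₂_notMem (hw ▸ h.x_mem)]

theorem neighborSet_v (h : IsChainExtension G A v w₁ w₂ x y₁ y₂) :
    G.neighborSet v = {w₁, w₂} := by
  ext u
  simp [h.adj_v]

theorem neighborSet_w₁ (h : IsChainExtension G A v w₁ w₂ x y₁ y₂) :
    G.neighborSet w₁ = {v, x} := by
  ext u
  simp [h.adj_w₁]

theorem deg_v (h : IsChainExtension G A v w₁ w₂ x y₁ y₂) : deg G v = 2 := by
  rw [deg, h.neighborSet_v, ncard_pair h.w₁_ne_w₂]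

theorem deg_w₁ (h : IsChainExtension G A v w₁ w₂ x y₁ y₂) : deg G w₁ = 2 := by
  rw [deg, h.neighborSet_w₁, ncard_pair (ne_of_mem_of_not_mem h.x_mem h.v_notMem).symm]

theorem neighborSet_w₂ (h : IsChainExtension G A v w₁ w₂ x y₁ y₂) :
    G.neighborSet w₂ = {v, y₁, y₂} := by
  ext u
  simp [h.adj_w₂]

theorem deg_w₂ (h : IsChainExtension G A v w₁ w₂ x y₁ y₂) : deg G w₂ = 3 := by
  have hv : v ∉ ({y₁, y₂} : Set V) := by
    rintro (hy | hy)
    exacts [h.v_notMem (hy ▸ h.y₁_mem), h.v_notMem (hy ▸ h.swap.y₁_mem)]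
  rw [deg, h.neighborSet_w₂, ncard_insert_of_notMem hv, ncard_pair h.y₁_ne_y₂]

theorem neighborSet_subset (h : IsChainExtension G A v w₁ w₂ x y₁ y₂) (hu : u ∈ A)
    (hux : u ≠ x) (huy₁ : u ≠ y₁) (huy₂ : u ≠ y₂) : G.neighborSet u ⊆ A := by
  intro b hb
  by_contra hbA
  rcases h.notMem_iff.1 hbA with rfl | rfl | rfl
  · exact h.not_adj_v_of_mem hu hb.symm
  · rcases (h.adj_w₁ u).1 hb.symm with rfl | rfl
    exacts [h.v_notMem hu, hux rfl]
  · rcases (h.adj_w₂ u).1 hb.symm with rfl | rfl | rfl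
    exacts [h.v_notMem hu, huy₁ rfl, huy₂ rfl]

theorem exists_adj_notMem (h : IsChainExtension G A v w₁ w₂ x y₁ y₂) (hu : u ∉ A) :
    ∃ b, G.Adj u b ∧ b ∉ A := by
  rcases h.notMem_iff.1 hu with rfl | rfl | rfl
  exacts [⟨w₁, h.adj_v_w₁, h.w₁_notMem⟩, ⟨v, h.adj_v_w₁.symm, h.v_notMem⟩,
    ⟨v, h.adj_v_w₂.symm, h.v_notMem⟩]

theorem isIndepSet_neighborSet_of_notMem (h : IsChainExtension G A v w₁ w₂ x y₁ y₂)
    (hA : GoodIn G A) (hu : u ∉ A) : G.IsIndepSet (G.neighborSet u) := by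
  rcases h.notMem_iff.1 hu with rfl | rfl | rfl
  · rw [h.neighborSet_v]
    exact isIndepSet_pair_of_not_adj h.not_adj_w₁_w₂
  · rw [h.neighborSet_w₁]
    exact isIndepSet_pair_of_not_adj (h.not_adj_v_of_mem h.x_mem)
  · rw [h.neighborSet_w₂]
    have hyy := hA.not_adj_of_adj_of_adj x h.x_mem y₁ h.y₁_mem y₂ h.swap.y₁_mem h.adj_x_y₁
      h.swap.adj_x_y₁
    refine (isIndepSet_pair_of_not_adj hyy).insert_of_not_adj fun b hb => h.not_adj_v_of_mem ?_
    rcases hb with rfl | rfl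
    exacts [h.y₁_mem, h.swap.y₁_mem]

theorem not_adj_of_adj_of_adj (h : IsChainExtension G A v w₁ w₂ x y₁ y₂) (hA : GoodIn G A)
    {a b c : V} (hab : G.Adj a b) (hac : G.Adj a c) : ¬ G.Adj b c := by
  intro hbc
  by_cases ha : a ∈ A
  · by_cases hb : b ∈ A
    · by_cases hc : c ∈ A
      · exact hA.not_adj_of_adj_of_adj a ha b hb c hc hab hac hbc
      · exact h.isIndepSet_neighborSet_of_notMem hA hc hac.symm hbc.symm (G.ne_of_adj hab) hab
    · exact h.isIndepSet_neighborSet_of_notMem hA hb hab.symm hbc (G.ne_of_adj hac) hac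
  · exact h.isIndepSet_neighborSet_of_notMem hA ha hab hac (G.ne_of_adj hbc) hbc

variable [Finite V]

theorem indepNum_le (h : IsChainExtension G A v w₁ w₂ x y₁ y₂) :
    _root_.indepNum G ≤ _root_.indepNum (G.induce A) + 1 := by
  obtain ⟨I, hI, hcard⟩ := exists_isIndepSet_ncard_eq_indepNum G
  have hsplit := ncard_inter_add_ncard_sdiff_eq_ncard I A
  have hIA : (I ∩ A).ncard ≤ _root_.indepNum (G.induce A) :=
    (hI.mono inter_subset_left).ncard_le_indepNum_induce inter_subset_right
  have hsub : I \ A ⊆ {v, w₁, w₂} := fun u hu => h.compl_eq ▸ hu.2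
  by_cases hw : w₁ ∈ I ∧ w₂ ∈ I
  · -- then `v ∉ I`, and `x` can replace both `w₁` and `w₂`
    have hxI : x ∉ I := fun hx => hI hw.1 hx (G.ne_of_adj h.adj_w₁_x) h.adj_w₁_x
    have hJ : G.IsIndepSet (insert x (I ∩ A)) :=
      (hI.mono inter_subset_left).insert_of_not_adj fun b hb hadj => by
        have hb' : b ∈ ({y₁, y₂} : Set V) := h.neighborSet_x_inter ▸ ⟨hadj, hb.2⟩
        rcases hb' with rfl | rfl
        exacts [hI hw.2 hb.1 (G.ne_of_adj h.adj_w₂_y₁) h.adj_w₂_y₁,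
          hI hw.2 hb.1 (G.ne_of_adj h.swap.adj_w₂_y₁) h.swap.adj_w₂_y₁]
    have hJcard := hJ.ncard_le_indepNum_induce (insert_subset h.x_mem inter_subset_right)
    rw [ncard_insert_of_notMem fun hx => hxI hx.1] at hJcard
    have hIw : I \ A ⊆ {w₁, w₂} := fun u hu => by
      rcases hsub hu with rfl | hu'
      · exact absurd h.adj_v_w₁ (hI hu.1 hw.1 (G.ne_of_adj h.adj_v_w₁))
      · exact hu'
    have := (ncard_le_ncard hIw).trans (ncard_pair h.w₁_ne_w₂).le
    omega
  · have : (I \ A).ncard ≤ 1 := by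
      rcases not_and_or.1 hw with hw | hw
      · refine (hI.mono sdiff_subset).ncard_le_one_of_subset_pair h.adj_v_w₂ fun u hu => ?_
        rcases hsub hu with rfl | rfl | rfl
        exacts [mem_insert _ _, absurd hu.1 hw, mem_insert_of_mem _ rfl]
      · refine (hI.mono sdiff_subset).ncard_le_one_of_subset_pair h.adj_v_w₁ fun u hu => ?_
        rcases hsub hu with rfl | rfl | rfl
        exacts [mem_insert _ _, mem_insert_of_mem _ rfl, absurd hu.1 hw]
    omega

theorem ncard_le_of_destab (h : IsChainExtension G A v w₁ w₂ x y₁ y₂) (hS : Destab G S)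
    (hs : G.IsIndepSet s) (hsS : s ⊆ Sᶜ) : s.ncard ≤ _root_.indepNum (G.induce A) := by
  have := hS.ncard_lt hs hsS
  have := h.indepNum_le
  omega

theorem exists_adj_of_destab (h : IsChainExtension G A v w₁ w₂ x y₁ y₂) (hS : Destab G S)
    (hs : G.IsIndepSet s) (hsA : s ⊆ A) (hsS : s ⊆ Sᶜ)
    (hcard : _root_.indepNum (G.induce A) ≤ s.ncard) {w : V} (hwA : w ∉ A) (hwS : w ∉ S) :
    ∃ b ∈ s, G.Adj w b := by
  by_contra! hw
  have := h.ncard_le_of_destab hS (hs.insert_of_not_adj hw) (insert_subset hwS hsS)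
  rw [ncard_insert_of_notMem fun hws => hwA (hsA hws)] at this
  omega

theorem destabIn_inter_of_v_notMem (h : IsChainExtension G A v w₁ w₂ x y₁ y₂)
    (hS : Destab G S) (hv : v ∉ S) : DestabIn G A (S ∩ A) := by
  by_contra hnd
  obtain ⟨s, hsA, hs, hcard⟩ := exists_isIndepSet_of_not_destabIn hnd
  obtain ⟨b, hb, hadj⟩ := h.exists_adj_of_destab hS hs (hsA.trans sdiff_subset)
    (subset_compl_of_subset_sdiff hsA subset_rfl) hcard h.v_notMem hv
  exact h.not_adj_v_of_mem (hsA hb).1 hadj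

theorem destabIn_insert_x_of_w₁_notMem (h : IsChainExtension G A v w₁ w₂ x y₁ y₂)
    (hS : Destab G S) (hw₁ : w₁ ∉ S) : DestabIn G A (insert x (S ∩ A)) := by
  by_contra hnd
  obtain ⟨s, hsA, hs, hcard⟩ := exists_isIndepSet_of_not_destabIn hnd
  obtain ⟨b, hb, hadj⟩ := h.exists_adj_of_destab hS hs (hsA.trans sdiff_subset)
    (subset_compl_of_subset_sdiff hsA (subset_insert _ _)) hcard h.w₁_notMem hw₁
  rcases (h.adj_w₁ b).1 hadj with rfl | rfl
  exacts [h.v_notMem (hsA hb).1, (hsA hb).2 (mem_insert _ _)]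

theorem destabIn_insert_y₁_insert_y₂_of_w₂_notMem (h : IsChainExtension G A v w₁ w₂ x y₁ y₂)
    (hS : Destab G S) (hw₂ : w₂ ∉ S) : DestabIn G A (insert y₁ (insert y₂ (S ∩ A))) := by
  by_contra hnd
  obtain ⟨s, hsA, hs, hcard⟩ := exists_isIndepSet_of_not_destabIn hnd
  obtain ⟨b, hb, hadj⟩ := h.exists_adj_of_destab hS hs (hsA.trans sdiff_subset)
    (subset_compl_of_subset_sdiff hsA ((subset_insert _ _).trans (subset_insert _ _))) hcard
    h.w₂_notMem hw₂
  rcases (h.adj_w₂ b).1 hadj with rfl | rfl | rfl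
  exacts [h.v_notMem (hsA hb).1, (hsA hb).2 (mem_insert _ _),
    (hsA hb).2 (mem_insert_of_mem _ (mem_insert _ _))]

theorem destabIn_inter_of_w₁_notMem_of_w₂_notMem
    (h : IsChainExtension G A v w₁ w₂ x y₁ y₂) (hS : Destab G S) (hw₁ : w₁ ∉ S) (hw₂ : w₂ ∉ S) :
    DestabIn G A (S ∩ A) := by
  by_contra hnd
  obtain ⟨s, hsA, hs, hcard⟩ := exists_isIndepSet_of_not_destabIn hnd
  have hsS := subset_compl_of_subset_sdiff hsA subset_rfl
  by_cases hx : x ∈ s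
  · -- `s` avoids the neighbours `y₁, y₂` of `x`, so `w₂` can be added
    obtain ⟨b, hb, hadj⟩ := h.exists_adj_of_destab hS hs (hsA.trans sdiff_subset) hsS hcard
      h.w₂_notMem hw₂
    rcases (h.adj_w₂ b).1 hadj with rfl | rfl | rfl
    exacts [h.v_notMem (hsA hb).1, hs hx hb (G.ne_of_adj h.adj_x_y₁) h.adj_x_y₁,
      hs hx hb (G.ne_of_adj h.swap.adj_x_y₁) h.swap.adj_x_y₁]
  · obtain ⟨b, hb, hadj⟩ := h.exists_adj_of_destab hS hs (hsA.trans sdiff_subset) hsS hcard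
      h.w₁_notMem hw₁
    rcases (h.adj_w₁ b).1 hadj with rfl | rfl
    exacts [h.v_notMem (hsA hb).1, hx hb]

theorem destabIn_insert_y₂_sdiff_of_w₁_notMem_of_w₂_notMem
    (h : IsChainExtension G A v w₁ w₂ x y₁ y₂) (hS : Destab G S) (hw₁ : w₁ ∉ S) (hw₂ : w₂ ∉ S) :
    DestabIn G A (insert y₂ ((S ∩ A) \ {x, y₁})) := by
  by_contra hnd
  obtain ⟨s, hsA, hs, hcard⟩ := exists_isIndepSet_of_not_destabIn hnd
  -- `s` contains at most one of the adjacent vertices `x, y₁`; replace it by `w₁, w₂`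
  set t := s \ {x, y₁}
  have hst : s.ncard ≤ t.ncard + 1 := by
    have : (s ∩ {x, y₁}).ncard + t.ncard = s.ncard := ncard_inter_add_ncard_sdiff_eq_ncard s _
    have := (hs.mono inter_subset_left).ncard_le_one_of_subset_pair h.adj_x_y₁ inter_subset_right
    omega
  have htA : t ⊆ A := fun b hb => (hsA hb.1).1
  have htS : t ⊆ Sᶜ := fun b hb hbS =>
    (hsA hb.1).2 (mem_insert_of_mem _ ⟨⟨hbS, (hsA hb.1).1⟩, hb.2⟩)
  have hJ₂ : G.IsIndepSet (insert w₂ t) :=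
    (hs.mono sdiff_subset).insert_of_not_adj fun b hb hadj => by
      rcases (h.adj_w₂ b).1 hadj with rfl | rfl | rfl
      exacts [h.v_notMem (htA hb), hb.2 (mem_insert_of_mem _ rfl), (hsA hb.1).2 (mem_insert _ _)]
  have hJ : G.IsIndepSet (insert w₁ (insert w₂ t)) := hJ₂.insert_of_not_adj fun b hb hadj => by
    rcases hb with rfl | hb
    · exact h.not_adj_w₁_w₂ hadj
    rcases (h.adj_w₁ b).1 hadj with rfl | rfl
    exacts [h.v_notMem (htA hb), hb.2 (mem_insert _ _)]
  have hw₁J : w₁ ∉ insert w₂ t := by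
    rintro (hw | hw)
    exacts [h.w₁_ne_w₂ hw, h.w₁_notMem (htA hw)]
  have := h.ncard_le_of_destab hS hJ (insert_subset hw₁ (insert_subset hw₂ htS))
  rw [ncard_insert_of_notMem hw₁J, ncard_insert_of_notMem fun hw => h.w₂_notMem (htA hw)]
    at this
  omega

theorem not_destab_of_v_mem_of_w₁_notMem (h : IsChainExtension G A v w₁ w₂ x y₁ y₂)
    (hA : GoodIn G A) (h3 : S.ncard ≤ 3) (hv : v ∈ S) (hw₁ : w₁ ∉ S) : ¬ Destab G S := by
  intro hS
  by_cases hw₂ : w₂ ∈ S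
  · have hcount := ncard_inter_add_ncard_le (insert_subset hv (singleton_subset_iff.2 hw₂))
      (insert_subset h.v_notMem (singleton_subset_iff.2 h.w₂_notMem))
    rw [ncard_pair (G.ne_of_adj h.adj_v_w₂)] at hcount
    have := hA.three_le_ncard (insert_subset h.x_mem inter_subset_right)
      (h.destabIn_insert_x_of_w₁_notMem hS hw₁)
    have := ncard_insert_le x (S ∩ A)
    omega
  · have hcount := ncard_inter_add_ncard_le (singleton_subset_iff.2 hv)
      (singleton_subset_iff.2 h.v_notMem)
    rw [ncard_singleton] at hcount
    have := hA.three_le_ncard inter_subset_right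
      (h.destabIn_inter_of_w₁_notMem_of_w₂_notMem hS hw₁ hw₂)
    omega

theorem not_destab_of_x_mem_of_y₁_mem (h : IsChainExtension G A v w₁ w₂ x y₁ y₂)
    (hA : GoodIn G A) (h3 : S.ncard ≤ 3) (hw₁ : w₁ ∉ S) (hw₂ : w₂ ∉ S) (hx : x ∈ S)
    (hy₁ : y₁ ∈ S) : ¬ Destab G S := by
  intro hS
  have hxy : {x, y₁} ⊆ S ∩ A :=
    insert_subset ⟨hx, h.x_mem⟩ (singleton_subset_iff.2 ⟨hy₁, h.y₁_mem⟩)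
  have hdiff := ncard_sdiff hxy
  rw [ncard_pair (G.ne_of_adj h.adj_x_y₁)] at hdiff
  have := ncard_le_ncard (inter_subset_left (s := S) (t := A))
  have := ncard_insert_le y₂ ((S ∩ A) \ {x, y₁})
  have := hA.three_le_ncard
    (insert_subset h.swap.y₁_mem (sdiff_subset.trans inter_subset_right))
    (h.destabIn_insert_y₂_sdiff_of_w₁_notMem_of_w₂_notMem hS hw₁ hw₂)
  omega

theorem exists_eq_closedNbhd_of_v_notMem (h : IsChainExtension G A v w₁ w₂ x y₁ y₂)
    (hA : GoodIn G A) (hS : Destab G S) (h3 : S.ncard ≤ 3) (hv : v ∉ S) :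
    ∃ u, deg G u = 2 ∧ S = closedNbhd G u := by
  have hU := h.destabIn_inter_of_v_notMem hS hv
  have hSA : S ∩ A = S := eq_of_subset_of_ncard_le inter_subset_left
    (h3.trans (hA.three_le_ncard inter_subset_right hU))
  obtain ⟨u, hu, h2, hSu⟩ := hA.eq_insert_of_destabIn _ inter_subset_right hU (by rwa [hSA])
  rw [hSA] at hSu
  have hw₁ : w₁ ∉ S := fun hw => h.w₁_notMem (hSA ▸ hw).2
  have hw₂ : w₂ ∉ S := fun hw => h.w₂_notMem (hSA ▸ hw).2
  have hxy : x ∈ S → y₁ ∉ S ∧ y₂ ∉ S := fun hx =>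
    ⟨fun hy => h.not_destab_of_x_mem_of_y₁_mem hA h3 hw₁ hw₂ hx hy hS,
      fun hy => h.swap.not_destab_of_x_mem_of_y₁_mem hA h3 hw₁ hw₂ hx hy hS⟩
  have hux : u ≠ x := by
    rintro rfl
    exact (hxy (hSu ▸ mem_insert u _)).1 (hSu ▸ mem_insert_of_mem _ ⟨h.adj_x_y₁, h.y₁_mem⟩)
  have huy₁ : u ≠ y₁ := by
    rintro rfl
    exact (hxy (hSu ▸ mem_insert_of_mem _ ⟨h.adj_x_y₁.symm, h.x_mem⟩)).1
      (hSu ▸ mem_insert u _)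
  have huy₂ : u ≠ y₂ := by
    rintro rfl
    exact (hxy (hSu ▸ mem_insert_of_mem _ ⟨h.swap.adj_x_y₁.symm, h.x_mem⟩)).2
      (hSu ▸ mem_insert u _)
  rw [inter_eq_left.2 (h.neighborSet_subset hu hux huy₁ huy₂)] at h2 hSu
  exact ⟨u, h2, hSu⟩

theorem eq_x_of_mem_insert (h : IsChainExtension G A v w₁ w₂ x y₁ y₂) (hA : GoodIn G A)
    (hu : u ∈ A) (h2 : (G.neighborSet u ∩ A).ncard = 2)
    (hy₁ : y₁ ∈ insert u (G.neighborSet u ∩ A)) (hy₂ : y₂ ∈ insert u (G.neighborSet u ∩ A)) :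
    u = x := by
  have hyy : ¬ G.Adj y₁ y₂ := hA.not_adj_of_adj_of_adj x h.x_mem y₁ h.y₁_mem y₂ h.swap.y₁_mem
    h.adj_x_y₁ h.swap.adj_x_y₁
  rcases hy₁ with rfl | hy₁
  · rcases hy₂ with hy | hy
    exacts [absurd hy h.y₁_ne_y₂.symm, absurd hy.1 hyy]
  rcases hy₂ with rfl | hy₂
  · exact absurd hy₁.1.symm hyy
  have hN : G.neighborSet u ∩ A = {y₁, y₂} := (eq_of_subset_of_ncard_le
    (insert_subset hy₁ (singleton_subset_iff.2 hy₂)) (by rw [h2, ncard_pair h.y₁_ne_y₂])).symm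
  exact hA.eq_of_neighborSet_inter_eq u hu x h.x_mem h2 (hN.trans h.neighborSet_x_inter.symm)

theorem eq_closedNbhd_w₁ (h : IsChainExtension G A v w₁ w₂ x y₁ y₂) (hA : GoodIn G A)
    (hS : Destab G S) (h3 : S.ncard ≤ 3) (hv : v ∈ S) (hw₁ : w₁ ∈ S) (hw₂ : w₂ ∉ S) :
    S = closedNbhd G w₁ := by
  have hcount := ncard_inter_add_ncard_le (insert_subset hv (singleton_subset_iff.2 hw₁))
    (insert_subset h.v_notMem (singleton_subset_iff.2 h.w₁_notMem))
  rw [ncard_pair (G.ne_of_adj h.adj_v_w₁)] at hcount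
  have hU3 : (insert y₁ (insert y₂ (S ∩ A))).ncard ≤ 3 := by
    have := ncard_insert_le y₁ (insert y₂ (S ∩ A))
    have := ncard_insert_le y₂ (S ∩ A)
    omega
  obtain ⟨u, hu, h2, hU⟩ := hA.eq_insert_of_destabIn _
    (insert_subset h.y₁_mem (insert_subset h.swap.y₁_mem inter_subset_right))
    (h.destabIn_insert_y₁_insert_y₂_of_w₂_notMem hS hw₂) hU3
  have hux : u = x := h.eq_x_of_mem_insert hA hu h2 (hU ▸ mem_insert _ _)
    (hU ▸ mem_insert_of_mem _ (mem_insert _ _))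
  have hxS : x ∈ S := by
    have hx : x ∈ insert y₁ (insert y₂ (S ∩ A)) := hU ▸ hux ▸ mem_insert u _
    rcases hx with hx | hx | hx
    exacts [absurd hx (G.ne_of_adj h.adj_x_y₁), absurd hx (G.ne_of_adj h.swap.adj_x_y₁), hx.1]
  refine eq_closedNbhd_of_subset h.deg_w₁ ?_ h3
  rw [closedNbhd, h.neighborSet_w₁]
  exact insert_subset hw₁ (insert_subset hv (singleton_subset_iff.2 hxS))

theorem exists_eq_closedNbhd (h : IsChainExtension G A v w₁ w₂ x y₁ y₂) (hA : GoodIn G A)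
    (hS : Destab G S) (h3 : S.ncard ≤ 3) : ∃ u, deg G u = 2 ∧ S = closedNbhd G u := by
  by_cases hv : v ∈ S
  · by_cases hw₁ : w₁ ∈ S
    · by_cases hw₂ : w₂ ∈ S
      · refine ⟨v, h.deg_v, eq_closedNbhd_of_subset h.deg_v ?_ h3⟩
        rw [closedNbhd, h.neighborSet_v]
        exact insert_subset hv (insert_subset hw₁ (singleton_subset_iff.2 hw₂))
      · exact ⟨w₁, h.deg_w₁, h.eq_closedNbhd_w₁ hA hS h3 hv hw₁ hw₂⟩
    · exact absurd hS (h.not_destab_of_v_mem_of_w₁_notMem hA h3 hv hw₁)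
  · exact h.exists_eq_closedNbhd_of_v_notMem hA hS h3 hv

theorem two_le_deg (h : IsChainExtension G A v w₁ w₂ x y₁ y₂) (hA : GoodIn G A) (u : V) :
    2 ≤ deg G u := by
  by_cases hu : u ∈ A
  · exact (hA.two_le_ncard_neighborSet_inter u hu).trans (ncard_le_ncard inter_subset_left)
  · rcases h.notMem_iff.1 hu with rfl | rfl | rfl
    · exact h.deg_v.ge
    · exact h.deg_w₁.ge
    · exact h.deg_w₂ ▸ by norm_num

theorem eq_of_neighborSet_eq (h : IsChainExtension G A v w₁ w₂ x y₁ y₂) (hA : GoodIn G A)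
    {u₁ u₂ : V} (hdeg : deg G u₁ = 2) (hN : G.neighborSet u₁ = G.neighborSet u₂) : u₁ = u₂ := by
  have hdeg₂ : deg G u₂ = 2 := by rw [deg, ← hN]; exact hdeg
  have mem_iff : u₁ ∈ A ↔ u₂ ∈ A := by
    constructor
    · intro hu₁
      by_contra hu₂
      obtain ⟨b, hb, hbA⟩ := h.exists_adj_notMem hu₂
      exact hbA (hA.neighborSet_subset_of_deg_eq_two hu₁ hdeg (hN ▸ hb))
    · intro hu₂
      by_contra hu₁
      obtain ⟨b, hb, hbA⟩ := h.exists_adj_notMem hu₁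
      exact hbA (hA.neighborSet_subset_of_deg_eq_two hu₂ hdeg₂ (hN.symm ▸ hb))
  by_cases hu₁ : u₁ ∈ A
  · have hu₂ := mem_iff.1 hu₁
    have hN₁ := inter_eq_left.2 (hA.neighborSet_subset_of_deg_eq_two hu₁ hdeg)
    have hN₂ := inter_eq_left.2 (hA.neighborSet_subset_of_deg_eq_two hu₂ hdeg₂)
    exact hA.eq_of_neighborSet_inter_eq u₁ hu₁ u₂ hu₂ (by rwa [hN₁]) (by rw [hN₁, hN₂, hN])
  · -- the bivalent vertices outside `A` are the adjacent vertices `v` and `w₁`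
    have hbiv : ∀ u ∉ A, deg G u = 2 → u = v ∨ u = w₁ := fun u hu hdeg => by
      rcases h.notMem_iff.1 hu with rfl | rfl | rfl
      exacts [.inl rfl, .inr rfl, absurd (h.deg_w₂ ▸ hdeg) (by norm_num)]
    have hnadj : ¬ G.Adj u₁ u₂ := fun hadj => G.irrefl (hN ▸ hadj : u₂ ∈ G.neighborSet u₂)
    rcases hbiv u₁ hu₁ hdeg with rfl | rfl <;>
      rcases hbiv u₂ (mem_iff.not.1 hu₁) hdeg₂ with rfl | rfl
    exacts [rfl, absurd h.adj_v_w₁ hnadj, absurd h.adj_v_w₁.symm hnadj, rfl]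

theorem goodIn_univ (h : IsChainExtension G A v w₁ w₂ x y₁ y₂) (hA : GoodIn G A) :
    GoodIn G univ where
  eq_insert_of_destabIn U _ hU h3 := by
    obtain ⟨u, hu, rfl⟩ := h.exists_eq_closedNbhd hA (destabIn_univ_iff.1 hU) h3
    exact ⟨u, mem_univ u, by rwa [inter_univ], by rw [inter_univ]; rfl⟩
  not_adj_of_adj_of_adj _ _ _ _ _ _ := h.not_adj_of_adj_of_adj hA
  two_le_ncard_neighborSet_inter u _ := by
    rw [inter_univ]
    exact h.two_le_deg hA u
  eq_of_neighborSet_inter_eq u₁ _ u₂ _ h2 hN := by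
    rw [inter_univ, inter_univ] at hN
    rw [inter_univ] at h2
    exact h.eq_of_neighborSet_eq hA h2 hN

end IsChainExtension

end ChainExtension

theorem deg_induce {V : Type} (G : SimpleGraph V) (A : Set V) (u : A) :
    deg (G.induce A) u = (G.neighborSet u ∩ A).ncard := by
  rw [deg, ← ncard_image_of_injective _ Subtype.val_injective]
  congr 1
  ext b
  constructor
  · rintro ⟨c, hc, rfl⟩
    exact ⟨hc, c.2⟩
  · rintro ⟨hadj, hb⟩
    exact ⟨⟨b, hb⟩, hadj, rfl⟩

theorem IsChainExtension.of_isChainGraph_step {V : Type} {G : SimpleGraph V}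
    {v w₁ w₂ x y₁ y₂ : V} (hw₁₂ : w₁ ≠ w₂) (hx : x ∉ ({v, w₁, w₂} : Set V))
    (hv : ∀ u, G.Adj v u ↔ u = w₁ ∨ u = w₂) (hw₁ : ∀ u, G.Adj w₁ u ↔ u = v ∨ u = x)
    (hw₂ : ∀ u, G.Adj w₂ u ↔ u = v ∨ (u ∉ ({v, w₁, w₂} : Set V) ∧ G.Adj x u))
    (hy : y₁ ≠ y₂) (hxy : G.neighborSet x ∩ {v, w₁, w₂}ᶜ = {y₁, y₂}) :
    IsChainExtension G {v, w₁, w₂}ᶜ v w₁ w₂ x y₁ y₂ where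
  compl_eq := compl_compl _
  adj_v := hv
  adj_w₁ := hw₁
  adj_w₂ u := by
    rw [hw₂, ← mem_compl_iff, and_comm, ← mem_neighborSet, ← mem_inter_iff, hxy]
    rfl
  neighborSet_x_inter := hxy
  x_mem := hx
  w₁_ne_w₂ := hw₁₂
  y₁_ne_y₂ := hy

theorem IsChainGraph.goodIn_univ {V : Type} [Finite V] {G : SimpleGraph V} {k : ℕ}
    (hG : IsChainGraph G k) : GoodIn G univ := by
  revert ‹Finite V›
  induction hG with
  | base G e =>
    intro _
    have h := goodIn_cycZ_five.image e.symm.toEmbedding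
    rwa [image_univ_of_surjective (f := e.symm.toEmbedding) e.symm.surjective] at h
  | step G k v w₁ w₂ x _ _ hw₁₂ hx _ hdeg hv hw₁ hw₂ ih =>
    intro _
    have hA : GoodIn G (Subtype.val '' univ) := ih.image (Embedding.induce _)
    rw [Subtype.coe_image_univ] at hA
    obtain ⟨y₁, y₂, hy, hxy⟩ := ncard_eq_two.1 ((deg_induce G _ ⟨x, hx⟩).symm.trans hdeg)
    exact (IsChainExtension.of_isChainGraph_step hw₁₂ hx hv hw₁ hw₂ hy hxy).goodIn_univ hA

theorem GoodIn.exists_eq_closedNbhd {V : Type} [Finite V] {G : SimpleGraph V} {S : Set V}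
    (hG : GoodIn G univ) (hS : Destab G S) (h3 : S.ncard ≤ 3) :
    ∃ u, deg G u = 2 ∧ S = closedNbhd G u := by
  obtain ⟨u, -, h2, rfl⟩ :=
    hG.eq_insert_of_destabIn S (subset_univ S) (destabIn_univ_iff.2 hS) h3
  rw [inter_univ] at h2 ⊢
  exact ⟨u, h2, rfl⟩

theorem stmt13_general {V : Type} [Fintype V] (G : SimpleGraph V) (k : ℕ)
    (hch : IsChainGraph G k) (S : Set V) (hS : Destab G S) :
    3 ≤ S.ncard ∧ (S.ncard = 3 ↔ ∃ v, deg G v = 2 ∧ S = closedNbhd G v) := by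
  have hsmall := hch.goodIn_univ.exists_eq_closedNbhd hS
  have hcard {v : V} (hv : deg G v = 2) : (closedNbhd G v).ncard = 3 := by
    rw [ncard_closedNbhd, hv]
  refine ⟨?_, fun h3 => hsmall h3.le, ?_⟩
  · by_contra! hlt
    obtain ⟨v, hv, rfl⟩ := hsmall (by omega)
    have := hcard hv
    omega
  · rintro ⟨v, hv, rfl⟩
    exact hcard hv

/-- Every destabiliser of `Ch_k` (`k ≥ 2`) has size at least 3, with size exactly 3
precisely for the closed neighbourhoods of bivalent vertices. -/
theorem stmt13 {V : Type} [Fintype V] (G : SimpleGraph V) (k : ℕ) (hk : 2 ≤ k)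
    (hch : IsChainGraph G k) (S : Set V) (hS : Destab G S) :
    3 ≤ S.ncard ∧ (S.ncard = 3 ↔ ∃ v, deg G v = 2 ∧ S = closedNbhd G v) :=
  stmt13_general G k hch S hS
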